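/- The minimal ε-order from the initial state to the goal state is the same under the original and the modified transition structure: d(s,g) = d̄(s,g). -/

import Mathlib

open Asymptotics Filter Set
open scoped Topology Classical

namespace PathZVA

variable {X : Type*}

/-- The probability of a path (a finite list of states): the product of its
transition probabilities. -/
def pathProb (p : X → X → ℝ) (l : List X) : ℝ :=
  ((l.zip l.tail).map fun q => p q.1 q.2).prod

/-- The ε-order of a path: the sum of the ε-orders of its transitions. -/
def pathOrder (r : X → X → ℕ) (l : List X) : ℕ :=
  ((l.zip l.tail).map fun q => r q.1 q.2).sum

/-- A path is valid if all of its transitions have not-identically-zero probability. -/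
def ValidPath (p : X → X → ℝ → ℝ) (l : List X) : Prop :=
  ∀ q ∈ l.zip l.tail, ∃ ε ∈ Set.Ioo (0:ℝ) 1, p q.1 q.2 ε ≠ 0

/-- Paths from `x` to `z` whose states strictly before the last one avoid `{t, g}`. -/
def PathsTo (g t x z : X) : Set (List X) :=
  {l | l.head? = some x ∧ l.getLast? = some z ∧ ∀ y ∈ l.dropLast, y ≠ t ∧ y ≠ g}

/-- Successful paths from `x`: they reach `g`, avoiding `{t, g}` before the end. -/
def Phi (g t x : X) : Set (List X) := PathsTo g t x g

/-- Minimal ε-order over valid paths from `x` to `z` (`∞` if there is none). -/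
noncomputable def minOrder (p : X → X → ℝ → ℝ) (r : X → X → ℕ) (g t x z : X) : ℕ∞ :=
  sInf ((fun l => (pathOrder r l : ℕ∞)) '' {l | l ∈ PathsTo g t x z ∧ ValidPath p l})

/-- `ε ^ n` for an extended natural number `n`, with `ε ^ ∞ = 0`. -/
noncomputable def epow (ε : ℝ) (n : ℕ∞) : ℝ := if n = ⊤ then 0 else ε ^ n.toNat

/-- `ε ^ (k * n)` (a real-exponent power) for an extended natural `n`; `0` for `n = ∞`. -/
noncomputable def repow (ε k : ℝ) (n : ℕ∞) : ℝ :=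
  if n = ⊤ then 0 else ε ^ (k * (n.toNat : ℝ))

/-- A family `v x` is `Θ(w x)` as `ε ↓ 0`, uniformly in `x`. -/
def UnifTheta (v w : X → ℝ → ℝ) : Prop :=
  ∃ a b : ℝ, 0 < a ∧ 0 < b ∧ ∀ x, ∀ᶠ ε in 𝓝[>] (0:ℝ),
    a * w x ε ≤ v x ε ∧ v x ε ≤ b * w x ε

/-- A highly reliable Markovian system: a DTMC whose transition probabilities are
parameterised by powers of a rarity parameter `ε`. -/
structure HRMS (X : Type*) where
  /-- transition probabilities, as functions of ε -/
  p : X → X → ℝ → ℝ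
  /-- ε-orders of the transitions -/
  r : X → X → ℕ
  /-- initial state -/
  s : X
  /-- goal state -/
  g : X
  /-- taboo/regeneration state -/
  t : X
  nonneg : ∀ x z, ∀ ε ∈ Set.Ioo (0:ℝ) 1, 0 ≤ p x z ε
  rowSum : ∀ x, ∀ ε ∈ Set.Ioo (0:ℝ) 1, HasSum (fun z => p x z ε) 1
  g_abs : ∀ ε ∈ Set.Ioo (0:ℝ) 1, p g g ε = 1
  t_abs : ∀ ε ∈ Set.Ioo (0:ℝ) 1, p t t ε = 1
  s_ne_g : s ≠ g
  s_ne_t : s ≠ t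
  order : ∀ x z, (∀ ε ∈ Set.Ioo (0:ℝ) 1, p x z ε = 0) ∨
    (fun ε => p x z ε) =Θ[𝓝[>] (0:ℝ)] fun ε => ε ^ r x z

namespace HRMS

variable (C : HRMS X)

/-- `d(x, z)`: the minimal ε-order over paths from `x` to `z`. -/
noncomputable def d (x z : X) : ℕ∞ := minOrder C.p C.r C.g C.t x z

/-- `Λ`: the states that are asymptotically at most as hard to reach from `s` as `g`. -/
def Lam : Set X := {x | C.d C.s x ≤ C.d C.s C.g}

/-- `Γ`: the states bordering `Λ`. -/
def Gam : Set X :=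
  {x | x ∉ C.Lam ∧ ∃ z ∈ C.Lam, ∃ ε ∈ Set.Ioo (0:ℝ) 1, C.p z x ε ≠ 0}

/-- The chain has no high-probability cycles. -/
def NoHPC : Prop :=
  ¬ ∃ l : List X, 2 ≤ l.length ∧ l.head? = l.getLast? ∧ ValidPath C.p l ∧
      (fun ε => pathProb (fun a b => C.p a b ε) l) =Θ[𝓝[>] (0:ℝ)] fun _ => (1:ℝ)

/-- The modified transition probabilities `p̄`, with shortcuts from `Γ` to `g`. -/
noncomputable def pbar (x z : X) (ε : ℝ) : ℝ :=
  if x ∈ C.Gam then (if z = C.g then 1 else 0) else C.p x z ε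

/-- The ε-orders of the transitions of `p̄`. -/
noncomputable def rbar (x z : X) : ℕ := if x ∈ C.Gam then 0 else C.r x z

/-- `d̄(x, z)`: the minimal ε-order over paths from `x` to `z` under `p̄`. -/
noncomputable def dbar (x z : X) : ℕ∞ := minOrder (fun a b ε => C.pbar a b ε) C.rbar C.g C.t x z

/-- `Δ(x)`: the dominant paths from `x` to `g`, i.e. those `ω ∈ Φ(x)` with
`P̄(ω) = Θ(ε^{d̄(x,g)})`. -/
def Delta (x : X) : Set (List X) :=
  {l | l ∈ Phi C.g C.t x ∧
    (fun ε => pathProb (fun a b => C.pbar a b ε) l) =Θ[𝓝[>] (0:ℝ)]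
      fun ε => epow ε (C.dbar x C.g)}

/-- `v^Δ(x)`: the total `P̄`-probability of the dominant paths from `x`. -/
noncomputable def vDelta (x : X) (ε : ℝ) : ℝ :=
  ∑' l : ↥(C.Delta x), pathProb (fun a b => C.pbar a b ε) (l : List X)

/-- The normalising denominator of the zero-variance-approximation measure. -/
noncomputable def qden (v : X → ℝ → ℝ) (x : X) (ε : ℝ) : ℝ :=
  ∑' z : X, C.pbar x z ε * v z ε

/-- The probability of a path under the importance-sampling measure `Q`:
zero-variance approximation based on `v` while the path stays in `Λ ∖ {g}`,
and the original measure `p` from the moment the path leaves `Λ` or hits `g`. -/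
noncomputable def Qprob (v : X → ℝ → ℝ) (ε : ℝ) : List X → ℝ
  | [] => 1
  | [_] => 1
  | x :: y :: l =>
    if x ∈ C.Lam ∧ x ≠ C.g then
      C.pbar x y ε * v y ε / C.qden v x ε * Qprob v ε (y :: l)
    else
      pathProb (fun a b => C.p a b ε) (x :: y :: l)

/-- `E_Q(L_Q^k · 1_S)`: the `k`-th moment of the likelihood ratio restricted to a
set `S` of paths. -/
noncomputable def EQkOn (S : Set (List X)) (v : X → ℝ → ℝ) (k ε : ℝ) : ℝ :=
  ∑' ω : ↥S, C.Qprob v ε (ω : List X) *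
    (pathProb (fun a b => C.p a b ε) (ω : List X) / C.Qprob v ε (ω : List X)) ^ k

/-- `E_Q(L_Q^k · 1_Φ)`. -/
noncomputable def EQk (v : X → ℝ → ℝ) (k ε : ℝ) : ℝ :=
  C.EQkOn (Phi C.g C.t C.s) v k ε

/-- `Var_Q(L_Q · 1_Φ) = E_Q(L_Q² · 1_Φ) − (E_Q(L_Q · 1_Φ))²`. -/
noncomputable def varQ (v : X → ℝ → ℝ) (ε : ℝ) : ℝ :=
  C.EQk v 2 ε - (C.EQk v 1 ε) ^ 2

end HRMS

end PathZVA

/-! A path whose states before the last avoid `Γ` is valid, with the same ε-order, under `p`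
and under `p̄`. Any other path from `s` to `g` is cut at its first state `y ∈ Γ`. Under `p̄`,
the prefix up to `y` followed by the order-`0` jump `y → g` has ε-order at most that of the
whole `p`-path, so `d̄(s,g) ≤ d(s,g)`. Conversely, the prefix of a `p̄`-path is a `p`-path
from `s` to `y ∉ Λ`, so its ε-order is at least `d(s,y) > d(s,g)`. -/

namespace PathZVA

variable {X : Type*}

lemma mem_dropLast_of_mem_zip_tail : ∀ {l : List X} {q : X × X},
    q ∈ l.zip l.tail → q.1 ∈ l.dropLast
  | [], _, h | [_], _, h => by simp at h
  | a :: b :: l, q, h => by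
    rw [List.tail_cons, List.zip_cons_cons, List.mem_cons] at h
    rcases h with rfl | h
    · simp
    · rw [List.dropLast_cons_cons]
      exact List.mem_cons_of_mem a (mem_dropLast_of_mem_zip_tail h)

lemma zip_tail_append_cons : ∀ (l₁ : List X) (y : X) (l₂ : List X),
    (l₁ ++ y :: l₂).zip (l₁ ++ y :: l₂).tail
      = (l₁ ++ [y]).zip (l₁ ++ [y]).tail ++ (y :: l₂).zip l₂
  | [], _, _ | [_], _, _ => by simp
  | a :: b :: l₁, y, l₂ => by
    have ih := zip_tail_append_cons (b :: l₁) y l₂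
    simp only [List.cons_append, List.tail_cons, List.zip_cons_cons] at ih ⊢
    rw [ih]

lemma pathOrder_append_cons (r : X → X → ℕ) (l₁ : List X) (y : X) (l₂ : List X) :
    pathOrder r (l₁ ++ y :: l₂) = pathOrder r (l₁ ++ [y]) + pathOrder r (y :: l₂) := by
  simp only [pathOrder]
  rw [zip_tail_append_cons, List.map_append, List.sum_append, List.tail_cons]

lemma validPath_append_cons {p : X → X → ℝ → ℝ} {l₁ : List X} {y : X} {l₂ : List X} :
    ValidPath p (l₁ ++ y :: l₂) ↔ ValidPath p (l₁ ++ [y]) ∧ ValidPath p (y :: l₂) := by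
  unfold ValidPath
  rw [zip_tail_append_cons]
  simp only [List.mem_append, List.tail_cons, or_imp, forall_and]

lemma pathOrder_congr {r r' : X → X → ℕ} {l : List X} (h : ∀ x ∈ l.dropLast, r x = r' x) :
    pathOrder r l = pathOrder r' l := by
  unfold pathOrder
  congr 1
  exact List.map_congr_left fun q hq => by rw [h q.1 (mem_dropLast_of_mem_zip_tail hq)]

lemma validPath_congr {p p' : X → X → ℝ → ℝ} {l : List X}
    (h : ∀ x ∈ l.dropLast, p x = p' x) :
    ValidPath p l ↔ ValidPath p' l := by
  refine forall₂_congr fun q hq => ?_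
  rw [h q.1 (mem_dropLast_of_mem_zip_tail hq)]

lemma mem_pathsTo_append_cons {g t x z y : X} {l₁ l₂ : List X} :
    l₁ ++ y :: l₂ ∈ PathsTo g t x z ↔
      l₁ ++ [y] ∈ PathsTo g t x y ∧ y :: l₂ ∈ PathsTo g t y z := by
  have hdrop : (l₁ ++ y :: l₂).dropLast = l₁ ++ (y :: l₂).dropLast :=
    List.dropLast_append_of_ne_nil (List.cons_ne_nil y l₂)
  have hhead : (l₁ ++ y :: l₂).head? = (l₁ ++ [y]).head? := by simp [List.head?_append]
  have hlast : (l₁ ++ y :: l₂).getLast? = (y :: l₂).getLast? := by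
    simp [List.getLast?_append, List.getLast?_cons]
  simp only [PathsTo, Set.mem_ofPred_eq, hdrop, hhead, hlast, List.dropLast_concat,
    List.mem_append, List.head?_cons, List.getLast?_concat, or_imp, forall_and]
  tauto

lemma ne_of_cons_mem_pathsTo {g t y z : X} {l : List X} (h : y :: l ∈ PathsTo g t y z)
    (hl : l ≠ []) : y ≠ t ∧ y ≠ g :=
  h.2.2 y (by simp [List.dropLast_cons_of_ne_nil hl])

lemma exists_first_mem_of_mem_dropLast {S : Set X} :
    ∀ {l : List X}, (∃ y ∈ l.dropLast, y ∈ S) →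
      ∃ l₁ y l₂, l = l₁ ++ y :: l₂ ∧ y ∈ S ∧ l₂ ≠ [] ∧ ∀ x ∈ l₁, x ∉ S
  | [], h | [_], h => by simp at h
  | a :: b :: l, ⟨y, hy, hyS⟩ => by
    by_cases ha : a ∈ S
    · exact ⟨[], a, b :: l, rfl, ha, List.cons_ne_nil b l, by simp⟩
    · rw [List.dropLast_cons_cons, List.mem_cons] at hy
      obtain ⟨l₁, y', l₂, hl, hy'S, hl₂, hl₁⟩ := exists_first_mem_of_mem_dropLast
        ⟨y, hy.resolve_left (by rintro rfl; exact ha hyS), hyS⟩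
      refine ⟨a :: l₁, y', l₂, by rw [hl]; rfl, hy'S, hl₂, ?_⟩
      simpa [ha] using hl₁

lemma minOrder_le {p : X → X → ℝ → ℝ} {r : X → X → ℕ} {g t x z : X} {l : List X}
    (hl : l ∈ PathsTo g t x z) (hv : ValidPath p l) : minOrder p r g t x z ≤ pathOrder r l :=
  sInf_le ⟨l, ⟨hl, hv⟩, rfl⟩

namespace HRMS

variable (C : HRMS X)

lemma validPath_pbar_iff {l : List X} (hl : ∀ x ∈ l.dropLast, x ∉ C.Gam) :
    ValidPath C.pbar l ↔ ValidPath C.p l :=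
  validPath_congr fun x hx => by funext z ε; simp [pbar, hl x hx]

lemma pathOrder_rbar {l : List X} (hl : ∀ x ∈ l.dropLast, x ∉ C.Gam) :
    pathOrder C.rbar l = pathOrder C.r l :=
  pathOrder_congr fun x hx => by funext z; simp [rbar, hl x hx]

lemma validPath_pbar_shortcut {y : X} (hy : y ∈ C.Gam) : ValidPath C.pbar [y, C.g] := by
  simpa [ValidPath, pbar, hy] using ⟨1 / 2, by norm_num⟩

lemma pathOrder_rbar_shortcut {y : X} (hy : y ∈ C.Gam) : pathOrder C.rbar [y, C.g] = 0 := by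
  simp [pathOrder, rbar, hy]

theorem dbar_le_d (x : X) : C.dbar x C.g ≤ C.d x C.g := by
  refine le_sInf ?_
  rintro _ ⟨l, ⟨hpath, hvalid⟩, rfl⟩
  dsimp only
  by_cases hΓ : ∃ y ∈ l.dropLast, y ∈ C.Gam
  · obtain ⟨l₁, y, l₂, rfl, hy, hl₂, hl₁⟩ := exists_first_mem_of_mem_dropLast hΓ
    have hl₁' : ∀ x ∈ (l₁ ++ [y]).dropLast, x ∉ C.Gam := by simpa using hl₁
    obtain ⟨hpre, hsuf⟩ := mem_pathsTo_append_cons.1 hpath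
    obtain ⟨hyt, hyg⟩ := ne_of_cons_mem_pathsTo hsuf hl₂
    have hshort : l₁ ++ [y, C.g] ∈ PathsTo C.g C.t x C.g :=
      mem_pathsTo_append_cons.2 ⟨hpre, rfl, rfl, by simp [hyt, hyg]⟩
    have hvshort : ValidPath C.pbar (l₁ ++ [y, C.g]) := validPath_append_cons.2
      ⟨(C.validPath_pbar_iff hl₁').2 (validPath_append_cons.1 hvalid).1,
        C.validPath_pbar_shortcut hy⟩
    calc C.dbar x C.g ≤ pathOrder C.rbar (l₁ ++ [y, C.g]) := minOrder_le hshort hvshort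
      _ = pathOrder C.r (l₁ ++ [y]) := by
        rw [pathOrder_append_cons, C.pathOrder_rbar hl₁', C.pathOrder_rbar_shortcut hy, add_zero]
      _ ≤ pathOrder C.r (l₁ ++ y :: l₂) := by
        rw [pathOrder_append_cons C.r l₁ y l₂]; exact_mod_cast Nat.le_add_right _ _
  · push Not at hΓ
    rw [← C.pathOrder_rbar hΓ]
    exact minOrder_le hpath ((C.validPath_pbar_iff hΓ).2 hvalid)

theorem d_le_dbar : C.d C.s C.g ≤ C.dbar C.s C.g := by
  refine le_sInf ?_
  rintro _ ⟨l, ⟨hpath, hvalid⟩, rfl⟩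
  dsimp only
  by_cases hΓ : ∃ y ∈ l.dropLast, y ∈ C.Gam
  · obtain ⟨l₁, y, l₂, rfl, hy, -, hl₁⟩ := exists_first_mem_of_mem_dropLast hΓ
    have hl₁' : ∀ x ∈ (l₁ ++ [y]).dropLast, x ∉ C.Gam := by simpa using hl₁
    have hpre := (mem_pathsTo_append_cons.1 hpath).1
    have hvpre := (C.validPath_pbar_iff hl₁').1 (validPath_append_cons.1 hvalid).1
    calc C.d C.s C.g ≤ C.d C.s y := le_of_not_ge hy.1
      _ ≤ pathOrder C.r (l₁ ++ [y]) := minOrder_le hpre hvpre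
      _ = pathOrder C.rbar (l₁ ++ [y]) := by rw [C.pathOrder_rbar hl₁']
      _ ≤ pathOrder C.rbar (l₁ ++ y :: l₂) := by
        rw [pathOrder_append_cons C.rbar l₁ y l₂]; exact_mod_cast Nat.le_add_right _ _
  · push Not at hΓ
    rw [C.pathOrder_rbar hΓ]
    exact minOrder_le hpath ((C.validPath_pbar_iff hΓ).1 hvalid)

end HRMS

end PathZVA

open PathZVA HRMS in
theorem d_eq_dbar_general {X : Type*} (C : HRMS X) :
    C.d C.s C.g = C.dbar C.s C.g :=
  le_antisymm C.d_le_dbar (C.dbar_le_d C.s)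

open PathZVA HRMS in
/-- Lemma 2: the minimal ε-order from the initial state `s` to the goal state `g`
is the same under the original and the modified transition structure:
`d(s,g) = d̄(s,g)`. -/
theorem d_eq_dbar {X : Type*} [Countable X] (C : HRMS X)
    (hΛfin : C.Lam.Finite) (hΓfin : C.Gam.Finite) :
    C.d C.s C.g = C.dbar C.s C.g :=
  d_eq_dbar_general C
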